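/- arXiv:2001.12005 — 4 statements merged into one kernel-verified Lean document; each statement's English description precedes it below -/
import Mathlib

section
/- If there exists a ladder system $\bar{\eta}$ on $S^2_1$ such that $\mathrm{Unif}_2(\bar{\eta})$ holds, then the Continuum Hypothesis $2^{\aleph_0} = \aleph_1$ holds. -/
open Set

noncomputable section

/-- The second uncountable cardinal, as an ordinal. -/
def omega2 : Ordinal.{0} := (Cardinal.aleph 2).ord

/-- The first uncountable cardinal, as an ordinal. -/
def omega1 : Ordinal.{0} := (Cardinal.aleph 1).ord

/-- `S²₁ = {α < ω₂ : cf α = ω₁}`. -/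
def S21 : Set Ordinal := {α | α < omega2 ∧ Ordinal.cof α = Cardinal.aleph 1}

/-- `S²₀ = {α < ω₂ : cf α = ω}`. -/
def S20 : Set Ordinal := {α | α < omega2 ∧ Ordinal.cof α = Cardinal.aleph 0}

/-- `A` is an unbounded subset of `δ`. -/
def unboundedIn (A : Set Ordinal) (δ : Ordinal) : Prop :=
  A ⊆ Iio δ ∧ ∀ β < δ, ∃ γ ∈ A, β ≤ γ

/-- `A` is closed in `δ`: every nonzero `β < δ` which is a limit of points of `A` lies in `A`. -/
def closedIn (A : Set Ordinal) (δ : Ordinal) : Prop :=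
  ∀ β < δ, β ≠ 0 → (∀ γ < β, ∃ ξ ∈ A, γ < ξ ∧ ξ < β) → β ∈ A

/-- `C` is a club (closed unbounded) subset of `δ`. -/
def clubIn (C : Set Ordinal) (δ : Ordinal) : Prop :=
  closedIn C δ ∧ unboundedIn C δ

/-- `S` is stationary in `δ`: it meets every club subset of `δ`. -/
def stationaryIn (S : Set Ordinal) (δ : Ordinal) : Prop :=
  ∀ C : Set Ordinal, clubIn C δ → (S ∩ C).Nonempty

/-- `e` is (the increasing enumeration of) a ladder system on `S²₁`: for each `δ ∈ S²₁`,
`e δ` enumerates, strictly increasingly along `ω₁`, an unbounded subset of `δ`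
of order type `ω₁`. -/
def IsLadderEnum (e : Ordinal → Ordinal → Ordinal) : Prop :=
  ∀ δ ∈ S21, StrictMonoOn (e δ) (Iio omega1) ∧
    (∀ i < omega1, e δ i < δ) ∧ (∀ β < δ, ∃ i < omega1, β ≤ e δ i)

/-- A club ladder system: additionally each enumeration is continuous, so each ladder is
a club subset of `δ` of order type `ω₁`. -/
def IsClubLadderEnum (e : Ordinal → Ordinal → Ordinal) : Prop :=
  IsLadderEnum e ∧
    ∀ δ ∈ S21, ∀ i < omega1, Order.IsSuccLimit i → e δ i = sSup (e δ '' Iio i)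

/-- The ladder at `δ` indexed by `T ⊆ ω₁`: the image `ν_δ[T]` of `T` under the
increasing enumeration. Taking `T = Iio omega1` gives the full ladder. -/
def lad (e : Ordinal → Ordinal → Ordinal) (T : Set Ordinal) (δ : Ordinal) : Set Ordinal :=
  e δ '' (T ∩ Iio omega1)

/-- `h` uniformizes the ladder coloring `c` on the ladder system `e ↾ T`:
for each `δ ∈ S²₁`, `h` agrees with `c δ` on a tail of the ladder at `δ`. -/
def Uniformizes {Λ : Type*} (e : Ordinal → Ordinal → Ordinal) (T : Set Ordinal)
    (c : Ordinal → Ordinal → Λ) (h : Ordinal → Λ) : Prop :=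
  ∀ δ ∈ S21, ∃ γ < δ, ∀ β ∈ lad e T δ, γ ≤ β → h β = c δ β

/-- The `Λ`-uniformization property for the ladder system `e ↾ T`. -/
def Unif (e : Ordinal → Ordinal → Ordinal) (T : Set Ordinal) (Λ : Type*) : Prop :=
  ∀ c : Ordinal → Ordinal → Λ, ∃ h : Ordinal → Λ, Uniformizes e T c h

/-- `A` is a `◇(S)`-sequence (for `S ⊆ κ`): it guesses every `X` stationarily often in `κ`. -/
def DiamondSeq (S : Set Ordinal) (κ : Ordinal) (A : Ordinal → Set Ordinal) : Prop :=
  (∀ α ∈ S, A α ⊆ Iio α) ∧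
    ∀ X : Set Ordinal, stationaryIn {α | α ∈ S ∧ X ∩ Iio α = A α} κ

/-- The diamond principle `◇(S)` for `S ⊆ κ`. -/
def DiamondP (S : Set Ordinal) (κ : Ordinal) : Prop :=
  ∃ A : Ordinal → Set Ordinal, DiamondSeq S κ A

/-- Reflection with pattern `T`: for every club ladder system and every stationary
`S ⊆ S²₀` there is `δ ∈ S²₁` with `S ∩ ν_δ[T]` stationary in `δ`. -/
def ReflPattern (T : Set Ordinal) : Prop :=
  ∀ e : Ordinal → Ordinal → Ordinal, IsClubLadderEnum e →
    ∀ S : Set Ordinal, S ⊆ S20 → stationaryIn S omega2 →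
      ∃ δ ∈ S21, stationaryIn (S ∩ lad e T δ) δ

/-- `NS_{ω₁} ↾ T` is saturated: every family of stationary subsets of `T` with pairwise
nonstationary intersections has size at most `ℵ₁`. -/
def SaturatedOn (T : Set Ordinal) : Prop :=
  ∀ A : Set (Set Ordinal), (∀ S ∈ A, S ⊆ T ∧ stationaryIn S omega1) →
    (∀ S ∈ A, ∀ S' ∈ A, S ≠ S' → ¬ stationaryIn (S ∩ S') omega1) →
    Cardinal.mk ↥A ≤ Cardinal.aleph 1


/-- Auxiliary recursion: iterate a closure operation along the ordinals. -/
noncomputable def auxChain (N : Ordinal → Ordinal) : Ordinal → Ordinal :=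
  fun i => N (Ordinal.blsub i (fun j _ => auxChain N j) + 1)
termination_by i => i
decreasing_by assumption

theorem auxChain_eq (N : Ordinal → Ordinal) (i : Ordinal) :
    auxChain N i = N (Ordinal.blsub i (fun j _ => auxChain N j) + 1) := by
  rw [auxChain]

theorem aux_cof_omega1 : omega1.cof = Cardinal.aleph 1 :=
  Cardinal.isRegular_aleph_one.cof_eq

theorem aux_cof_omega2 : omega2.cof = Cardinal.aleph 2 := by
  have h : (Cardinal.aleph 2).IsRegular := by
    have := Cardinal.isRegular_aleph_succ 1
    rwa [show Order.succ (1 : Ordinal) = 2 from Ordinal.succ_one] at this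
  exact h.cof_eq

theorem aux_omega1_isLimit : Order.IsSuccLimit omega1 :=
  Cardinal.isSuccLimit_ord (Cardinal.aleph0_le_aleph 1)

theorem aux_omega2_isLimit : Order.IsSuccLimit omega2 :=
  Cardinal.isSuccLimit_ord (Cardinal.aleph0_le_aleph 2)

/-- The cofinality of the least strict upper bound of a strictly increasing
`ω₁`-sequence of ordinals is `ℵ₁`. -/
theorem aux_cof_blsub (v : Ordinal.{0} → Ordinal.{0}) (hv : ∀ {j i : Ordinal}, j < i → v j < v i) :
    (Ordinal.blsub omega1 (fun j _ => v j)).cof = Cardinal.aleph 1 := by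
  set d := Ordinal.blsub omega1 (fun j _ => v j) with hd
  refine le_antisymm ?_ ?_
  · have h := Ordinal.cof_blsub_le (fun j (_ : j < omega1) => v j)
    rwa [show omega1.card = Cardinal.aleph 1 from Cardinal.card_ord _] at h
  · by_contra hlt
    push_neg at hlt
    obtain ⟨f, hf⟩ := Ordinal.exists_blsub_cof d
    have ho : d.cof.ord < omega1 := Cardinal.ord_lt_ord.2 hlt
    have hfd : ∀ a (ha : a < d.cof.ord), f a ha < d := by
      intro a ha
      conv_rhs => rw [← hf]
      exact Ordinal.lt_blsub _ a ha
    have hJ : ∀ a (ha : a < d.cof.ord), ∃ i, ∃ _ : i < omega1, f a ha ≤ v i := by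
      intro a ha
      exact Ordinal.lt_blsub_iff.1 (hd ▸ hfd a ha)
    choose J hJ1 hJ2 using hJ
    set js := Ordinal.blsub d.cof.ord J with hjs
    have hjslt : js < omega1 := by
      apply Ordinal.blsub_lt_ord _ hJ1
      rw [aux_cof_omega1, Cardinal.card_ord]
      exact hlt
    have hdle : d ≤ v js := by
      rw [← hf]
      apply Ordinal.blsub_le
      intro a ha
      exact lt_of_le_of_lt (hJ2 a ha) (hv (Ordinal.lt_blsub _ a ha))
    have hjs1 : js + 1 < omega1 := by
      rw [Ordinal.add_one_eq_succ]
      exact aux_omega1_isLimit.succ_lt hjslt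
    have : v (js + 1) < d := Ordinal.lt_blsub _ (js + 1) hjs1
    have hlt2 : v js < v (js + 1) := hv (by rw [Ordinal.add_one_eq_succ]; exact Order.lt_succ js)
    exact absurd ((hdle.trans_lt hlt2).trans this) (lt_irrefl d)

theorem aux_aleph2_le (h : Cardinal.aleph.{u} 2 ≤ Cardinal.continuum.{u}) :
    Cardinal.aleph.{0} 2 ≤ Cardinal.continuum.{0} := by
  have h1 : Cardinal.lift.{u} (Cardinal.aleph.{0} 2) ≤ Cardinal.lift.{u} Cardinal.continuum.{0} := by
    rw [Cardinal.lift_continuum, Cardinal.lift_aleph, Ordinal.lift_ofNat]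
    exact h
  exact Cardinal.lift_le.1 h1

/-- If some ladder system on `S²₁` satisfies `Unif₂`, then CH holds. -/
theorem unif2_implies_CH
    (e : Ordinal → Ordinal → Ordinal) (he : IsLadderEnum e)
    (h2 : Unif e (Iio omega1) Bool) :
    Cardinal.continuum = Cardinal.aleph 1 := by
  classical
  refine le_antisymm ?_ Cardinal.aleph_one_le_continuum
  by_contra hc
  push_neg at hc
  have h2c : Cardinal.aleph 2 ≤ Cardinal.continuum := by
    have h := Order.succ_le_of_lt hc
    rwa [← Cardinal.aleph_succ, show Order.succ (1 : Ordinal) = 2 from Ordinal.succ_one] at h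
  have h2c0 := aux_aleph2_le h2c
  -- an injection of the ordinals below `ω₂` into the reals
  have hmk : Cardinal.mk (↥(Iio omega2)) ≤ Cardinal.mk (ULift.{1} (ℕ → Bool)) := by
    rw [Ordinal.mk_Iio_ordinal, Cardinal.mk_uLift,
      show omega2.card = Cardinal.aleph 2 from Cardinal.card_ord _,
      show Cardinal.mk (ℕ → Bool) = Cardinal.continuum by simp [Cardinal.mk_arrow]]
    exact Cardinal.lift_le.2 h2c0
  obtain ⟨emb⟩ := Cardinal.le_def _ _ |>.1 hmk
  set F : Ordinal → ℕ → Bool :=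
    fun α => if h : α < omega2 then (emb ⟨α, h⟩).down else fun _ => false with hF
  have Finj : ∀ α, α < omega2 → ∀ α', α' < omega2 → F α = F α' → α = α' := by
    intro α hα α' hα' hEq
    simp only [hF, dif_pos hα, dif_pos hα'] at hEq
    have := emb.injective (ULift.ext _ _ hEq)
    exact congrArg Subtype.val this
  -- uniformize each coordinate
  have hu : ∀ n : ℕ, ∃ h : Ordinal → Bool,
      Uniformizes e (Iio omega1) (fun δ _ => F δ n) h := fun n => h2 _
  choose hs hspec using hu
  -- for each `δ ∈ S²₁` pick a ladder point past all the stabilization points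
  have key : ∀ δ ∈ S21, ∃ β, β < δ ∧ ∀ n, hs n β = F δ n := by
    intro δ hδ
    have hcof : δ.cof = Cardinal.aleph 1 := hδ.2
    choose Γ hΓlt hΓ using fun n => hspec n δ hδ
    have hγ : (⨆ n, Γ n) < δ := by
      apply Ordinal.iSup_lt_ord _ hΓlt
      rw [hcof, Cardinal.mk_nat]
      exact Cardinal.aleph0_lt_aleph_one
    obtain ⟨i, hi, hle⟩ := (he δ hδ).2.2 _ hγ
    refine ⟨e δ i, (he δ hδ).2.1 i hi, fun n => ?_⟩
    exact hΓ n (e δ i) ⟨i, ⟨hi, hi⟩, rfl⟩ ((Ordinal.le_iSup Γ n).trans hle)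
  set g : Ordinal → Ordinal :=
    fun δ => if h : δ ∈ S21 then (key δ h).choose else 0 with hgdef
  have hg1 : ∀ δ, δ ∈ S21 → g δ < δ := by
    intro δ h
    simp only [hgdef, dif_pos h]
    exact (key δ h).choose_spec.1
  have hg2 : ∀ δ, (h : δ ∈ S21) → ∀ n, hs n (g δ) = F δ n := by
    intro δ h n
    simp only [hgdef, dif_pos h]
    exact (key δ h).choose_spec.2 n
  have ginj : ∀ δ, δ ∈ S21 → ∀ δ', δ' ∈ S21 → g δ = g δ' → δ = δ' := by
    intro δ h δ' h' hEq
    refine Finj δ h.1 δ' h'.1 ?_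
    funext n
    rw [← hg2 δ h n, hEq, hg2 δ' h' n]
  set inv : Ordinal → Ordinal :=
    fun β => if h : ∃ δ, δ ∈ S21 ∧ g δ = β then h.choose else 0 with hinvdef
  have hinv : ∀ δ, δ ∈ S21 → inv (g δ) = δ := by
    intro δ hδ
    have hex : ∃ δ', δ' ∈ S21 ∧ g δ' = g δ := ⟨δ, hδ, rfl⟩
    simp only [hinvdef, dif_pos hex]
    exact ginj _ hex.choose_spec.1 _ hδ hex.choose_spec.2
  have hinvlt : ∀ β, inv β < omega2 := by
    intro β
    simp only [hinvdef]
    split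
    · next h => exact h.choose_spec.1.1
    · exact aux_omega2_isLimit.pos
  -- the closure operation
  set N : Ordinal → Ordinal :=
    fun α => Ordinal.blsub α (fun β _ => max (inv β) β) with hNdef
  have hN1 : ∀ α, α ≤ N α := by
    intro α
    apply le_of_forall_lt
    intro β hβ
    exact lt_of_le_of_lt (le_max_right _ _) (Ordinal.lt_blsub _ β hβ)
  have hN2 : ∀ α, α < omega2 → N α < omega2 := by
    intro α hα
    apply Ordinal.blsub_lt_ord
    · rw [aux_cof_omega2]
      exact Cardinal.lt_ord.1 hα
    · intro β hβ
      exact max_lt (hinvlt β) (hβ.trans hα)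
  have hN3 : ∀ α, ∀ δ, δ ∈ S21 → g δ < α → δ < N α := by
    intro α δ hδ hlt
    calc δ = inv (g δ) := (hinv δ hδ).symm
      _ ≤ max (inv (g δ)) (g δ) := le_max_left _ _
      _ < N α := Ordinal.lt_blsub _ _ hlt
  -- iterate it `ω₁` times
  set v : Ordinal → Ordinal := auxChain N with hvdef
  have hvmono : ∀ {j i : Ordinal}, j < i → v j < v i := by
    intro j i h
    rw [hvdef, auxChain_eq N i]
    refine lt_of_lt_of_le ?_ (hN1 _)
    exact lt_of_lt_of_le (Ordinal.lt_blsub (fun j _ => auxChain N j) j h)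
      (le_of_lt (by rw [Ordinal.add_one_eq_succ]; exact Order.lt_succ _))
  have hvlt : ∀ i, i < omega1 → v i < omega2 := by
    intro i
    induction i using Ordinal.induction with
    | _ i IH =>
      intro hi
      rw [hvdef, auxChain_eq N i]
      apply hN2
      have hb : Ordinal.blsub i (fun j _ => auxChain N j) < omega2 := by
        apply Ordinal.blsub_lt_ord
        · rw [aux_cof_omega2]
          exact (Cardinal.lt_ord.1 (hi.trans (Cardinal.ord_lt_ord.2
            (Cardinal.aleph_lt_aleph.2 one_lt_two))))
        · intro j hj
          exact IH j hj (hj.trans hi)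
      rw [Ordinal.add_one_eq_succ]
      exact aux_omega2_isLimit.succ_lt hb
  set dstar : Ordinal := Ordinal.blsub omega1 (fun j _ => v j) with hdstar
  have hd2 : dstar < omega2 := by
    apply Ordinal.blsub_lt_ord _ hvlt
    rw [aux_cof_omega2, show omega1.card = Cardinal.aleph 1 from Cardinal.card_ord _]
    exact Cardinal.aleph_lt_aleph.2 one_lt_two
  have hdS : dstar ∈ S21 := ⟨hd2, aux_cof_blsub v hvmono⟩
  have hreg : g dstar < dstar := hg1 _ hdS
  obtain ⟨j, hj, hle⟩ := Ordinal.lt_blsub_iff.1 hreg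
  have hj1 : j + 1 < omega1 := by
    rw [Ordinal.add_one_eq_succ]
    exact aux_omega1_isLimit.succ_lt hj
  have hup : dstar < v (j + 1) := by
    rw [hvdef, auxChain_eq N (j + 1)]
    apply hN3 _ _ hdS
    have h1 : g dstar < Ordinal.blsub (j + 1) (fun k _ => auxChain N k) := by
      refine lt_of_le_of_lt hle ?_
      exact Ordinal.lt_blsub (fun k _ => auxChain N k) j
        (by rw [Ordinal.add_one_eq_succ]; exact Order.lt_succ j)
    exact h1.trans (by rw [Ordinal.add_one_eq_succ]; exact Order.lt_succ _)
  exact absurd (hup.trans (Ordinal.lt_blsub (fun j _ => v j) (j + 1) hj1)) (lt_irrefl dstar)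
end
end

section
/- If there exists a ladder system $\bar{\eta}$ on $S^2_1$ such that $\mathrm{Unif}_2(\bar{\eta})$ holds, then $\mathrm{Unif}_{\aleph_1}(\bar{\eta})$ holds: every ladder coloring with values in $\omega_1$ admits a uniformizing function. -/
open Set

noncomputable section

/-- If a ladder system on `S²₁` satisfies `Unif₂`, then it satisfies
`Unif_{ℵ₁}`: every coloring with values in `ω₁` admits a uniformizing function
(also valued in `ω₁`). -/
theorem unif2_implies_unif_aleph1
    (e : Ordinal → Ordinal → Ordinal) (he : IsLadderEnum e)
    (h2 : Unif e (Iio omega1) Bool) :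
    ∀ c : Ordinal → Ordinal → Ordinal, (∀ δ β, c δ β < omega1) →
      ∃ h : Ordinal → Ordinal, (∀ β, h β < omega1) ∧ Uniformizes e (Iio omega1) c h := by
  intro c hc
  -- an injection from ordinals below ω₁ into ℕ → Bool
  obtain ⟨f, hf⟩ : ∃ f : ↥(Iio omega1) → (ℕ → Bool), Function.Injective f := by
    have h2' : Cardinal.lift.{0,1} (Cardinal.mk ↥(Iio omega1)) ≤
        Cardinal.lift.{1,0} (Cardinal.mk (ℕ → Bool)) := by
      rw [Cardinal.lift_uzero, Ordinal.mk_Iio_ordinal, omega1, Cardinal.card_ord,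
        Cardinal.mk_arrow]
      simp only [Cardinal.lift_le, Cardinal.mk_bool, Cardinal.mk_nat, Cardinal.lift_id]
      simpa using Cardinal.aleph_one_le_continuum
    obtain ⟨g⟩ := Cardinal.lift_mk_le'.mp h2'
    exact ⟨g, g.injective⟩
  -- uniformize each boolean coordinate
  have key : ∀ n : ℕ, ∃ h : Ordinal → Bool,
      Uniformizes e (Iio omega1) (fun δ β => f ⟨c δ β, hc δ β⟩ n) h :=
    fun n => h2 _
  choose H hH using key
  classical
  -- decode
  refine ⟨fun β => if hx : ∃ x : ↥(Iio omega1), f x = fun n => H n β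
    then (hx.choose : ↥(Iio omega1)).1 else 0, ?_, ?_⟩
  · intro β
    dsimp only
    split
    · rename_i hx
      exact hx.choose.2
    · rw [omega1, Cardinal.lt_ord]
      simpa using Cardinal.aleph_pos 1
  · intro δ hδ
    choose γ hγlt hγ using fun n => hH n δ hδ
    have hδ0 : 0 < δ := (pos_iff_ne_zero.2 (by
      intro h0
      have := hδ.2
      rw [h0] at this
      simp [Ordinal.cof_zero] at this
      exact (Cardinal.aleph_pos 1).ne' this.symm))
    refine ⟨⨆ n, γ n, ?_, ?_⟩
    · apply Ordinal.iSup_lt_ord _ hγlt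
      rw [hδ.2]
      simpa using Cardinal.aleph0_lt_aleph_one
    · intro β hβ hβγ
      have hβγn : ∀ n, γ n ≤ β := fun n => le_trans (Ordinal.le_iSup γ n) hβγ
      have heq : ∀ n, H n β = f ⟨c δ β, hc δ β⟩ n := fun n => hγ n β hβ (hβγn n)
      have hx : ∃ x : ↥(Iio omega1), f x = fun n => H n β :=
        ⟨⟨c δ β, hc δ β⟩, by funext n; exact (heq n).symm⟩
      dsimp only
      rw [dif_pos hx]
      have h1 : f hx.choose = f ⟨c δ β, hc δ β⟩ := by
        rw [hx.choose_spec]; funext n; exact heq n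
      exact congrArg Subtype.val (hf h1)
end
end

section
/- A diamond sequence on $\omega_1$ remains a diamond sequence in any countably closed forcing extension: if $\langle A_\alpha \subseteq \alpha : \alpha < \omega_1 \rangle$ is a $\diamondsuit(\omega_1)$-sequence in $V$ and $P$ is a countably closed forcing, then in $V^P$ the same sequence still guesses every subset of $\omega_1$ stationarily often. -/
open Set

noncomputable section

/-- The forcing `P` is countably closed: every decreasing `ω`-sequence has a lower bound. -/
def CtblClosed (P : Type*) [Preorder P] : Prop :=
  ∀ f : ℕ → P, (∀ n, f (n + 1) ≤ f n) → ∃ q : P, ∀ n, q ≤ f n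

universe u

/-- A `P`-name for a subset of `ω₁`: `mem β` is the (downward closed) set of conditions
forcing `β` into the named set. -/
structure SubsetName (P : Type*) [Preorder P] where
  mem : Ordinal.{u} → Set P
  down : ∀ β : Ordinal.{u}, ∀ p ∈ mem β, ∀ q, q ≤ p → q ∈ mem β

/-- A `P`-name for a club subset of `ω₁`: a subset name which is forced to be unbounded
and closed in `ω₁`. -/
structure ClubName (P : Type*) [Preorder P] extends SubsetName P where
  unbdd : ∀ p : P, ∀ β < omega1, ∃ q, q ≤ p ∧ ∃ γ, β < γ ∧ γ < omega1 ∧ q ∈ mem γ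
  closedF : ∀ q : P, ∀ α < omega1, α ≠ 0 →
    (∀ β < α, ∀ r, r ≤ q → ∃ s, s ≤ r ∧ ∃ γ, β < γ ∧ γ < α ∧ s ∈ mem γ) → q ∈ mem α

/-- `q` forces that the named set, intersected with `α`, equals `A`. -/
def forcesEq {P : Type*} [Preorder P] (X : SubsetName P) (q : P) (A : Set Ordinal)
    (α : Ordinal) : Prop :=
  ∀ β < α, (β ∈ A → q ∈ X.mem β) ∧ (β ∉ A → ∀ r, r ≤ q → r ∉ X.mem β)



namespace DPaux
open Cardinal

lemma omega1_limit : Order.IsSuccLimit omega1 := Cardinal.isSuccLimit_ord (Cardinal.aleph0_le_aleph 1)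

lemma iSup_sequence_lt_omega1 (f : ℕ → Ordinal.{0}) (h : ∀ n, f n < omega1) :
    iSup f < omega1 := by
  have h' : ∀ n, f n < Ordinal.omega 1 := by simpa [omega1, Cardinal.ord_aleph] using h
  simpa [omega1, Cardinal.ord_aleph] using Ordinal.iSup_lt_omega_one h'

lemma countable_Iio {α : Ordinal.{0}} (h : α < omega1) : Countable (Iio α) := by
  have h1 : α.card < Cardinal.aleph 1 := Cardinal.lt_ord.1 h
  have h2 : #(Iio α) < Cardinal.aleph 1 := by
    rw [Ordinal.mk_Iio_ordinal]
    have := Cardinal.lift_lt.{0,1}.2 h1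
    rwa [Cardinal.lift_aleph, Ordinal.lift_one] at this
  exact ((Cardinal.countable_iff_lt_aleph_one (Iio α)).2 h2).to_subtype

lemma exists_mono_cofinal {α : Ordinal.{0}} (h0 : α ≠ 0) (hα : α < omega1) :
    ∃ b : ℕ → Ordinal, (∀ n, b n < α) ∧ (∀ n, b n ≤ b (n + 1)) ∧ ∀ β < α, ∃ n, β ≤ b n := by
  haveI := countable_Iio hα
  have hc : (Iio α).Countable := Set.countable_coe_iff.1 inferInstance
  have hne : (Iio α).Nonempty := ⟨0, pos_iff_ne_zero.2 h0⟩
  obtain ⟨f, hf⟩ := hc.exists_eq_range hne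
  set b : ℕ → Ordinal := fun n => Nat.rec (f 0) (fun n ih => max ih (f (n + 1))) n with hb
  have hmono : ∀ n, b n ≤ b (n + 1) := fun n => le_max_left _ _
  have hfb : ∀ n, f n ≤ b n := by
    intro n; cases n with
    | zero => exact le_rfl
    | succ n => exact le_max_right _ _
  have hlt : ∀ n, b n < α := by
    intro n; induction n with
    | zero => exact (hf ▸ Set.mem_range_self 0 : f 0 ∈ Iio α)
    | succ n ih => exact max_lt ih (hf ▸ Set.mem_range_self (n + 1) : f (n + 1) ∈ Iio α)
  refine ⟨b, hlt, hmono, fun β hβ => ?_⟩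
  obtain ⟨n, hn⟩ := (hf ▸ hβ : β ∈ range f)
  exact ⟨n, hn ▸ hfb n⟩

variable {P : Type*} [Preorder P] (X : SubsetName P) (C : ClubName P) (p : P)

def GoodAt (α : Ordinal) (hist : ∀ β, β < α → P) (q : P) : Prop :=
  q ≤ p ∧ (∀ β (h : β < α), q ≤ hist β h) ∧
    (∃ γ, α < γ ∧ γ < omega1 ∧ q ∈ C.mem γ) ∧
    (q ∈ X.mem α ∨ ∀ r ≤ q, r ∉ X.mem α)

open Classical in
noncomputable def chain : Ordinal → P :=
  WellFounded.fix wellFounded_lt (fun α ih =>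
    if h : ∃ q, GoodAt X C p α ih q then h.choose else p)

open Classical in
lemma chain_eq (α : Ordinal) :
    chain X C p α =
      if h : ∃ q, GoodAt X C p α (fun β _ => chain X C p β) q then h.choose else p := by
  exact WellFounded.fix_eq _ _ _

lemma chain_good (hcc : CtblClosed P) :
    ∀ α < omega1, GoodAt X C p α (fun β _ => chain X C p β) (chain X C p α) := by
  intro α
  induction α using Ordinal.induction with
  | _ α ih =>
  intro hα
  have hlb : ∃ q₀ : P, q₀ ≤ p ∧ ∀ β < α, q₀ ≤ chain X C p β := by
    rcases Ordinal.zero_or_succ_or_isSuccLimit α with h0 | ⟨a, ha⟩ | hl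
    · refine ⟨p, le_rfl, fun β hβ => absurd hβ (by simp [h0] : ¬ β < α)⟩
    · subst ha
      have haa : a < Order.succ a := Order.lt_succ a
      have hg := ih a haa (haa.trans hα)
      refine ⟨chain X C p a, hg.1, fun β hβ => ?_⟩
      rcases (Order.lt_succ_iff.1 hβ).lt_or_eq with h | h
      · exact hg.2.1 β h
      · exact h ▸ le_rfl
    · have mono : ∀ β γ : Ordinal, β ≤ γ → γ < α → chain X C p γ ≤ chain X C p β := by
        intro β γ hbg hga
        rcases hbg.lt_or_eq with h | h
        · exact (ih γ hga (hga.trans hα)).2.1 β h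
        · exact h ▸ le_rfl
      obtain ⟨b, hblt, hbmono, hbcof⟩ := exists_mono_cofinal hl.pos.ne' hα
      obtain ⟨q₀, hq₀⟩ := hcc (fun n => chain X C p (b n))
        (fun n => mono _ _ (hbmono n) (hblt (n + 1)))
      refine ⟨q₀, (hq₀ 0).trans (ih (b 0) (hblt 0) ((hblt 0).trans hα)).1, fun β hβ => ?_⟩
      obtain ⟨n, hn⟩ := hbcof β hβ
      exact (hq₀ n).trans (mono _ _ hn (hblt n))
  obtain ⟨q₀, hq₀p, hq₀⟩ := hlb
  obtain ⟨q₁, hq₁, γ, hγ1, hγ2, hq₁mem⟩ := C.unbdd q₀ α hα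
  have hex : ∃ q, GoodAt X C p α (fun β _ => chain X C p β) q := by
    by_cases h : ∃ r, r ≤ q₁ ∧ r ∈ X.mem α
    · obtain ⟨r, hr, hrmem⟩ := h
      exact ⟨r, (hr.trans hq₁).trans hq₀p, fun β hβ => (hr.trans hq₁).trans (hq₀ β hβ),
        ⟨γ, hγ1, hγ2, C.down γ q₁ hq₁mem r hr⟩, Or.inl hrmem⟩
    · push_neg at h
      exact ⟨q₁, hq₁.trans hq₀p, fun β hβ => hq₁.trans (hq₀ β hβ),
        ⟨γ, hγ1, hγ2, hq₁mem⟩, Or.inr h⟩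
  rw [chain_eq, dif_pos hex]
  exact hex.choose_spec

lemma succ_lt_omega1 {y : Ordinal.{0}} (hy : y < omega1) : y + 1 < omega1 := by
  rw [Ordinal.add_one_eq_succ]
  exact omega1_limit.succ_lt hy

lemma exists_stepfun (c : Ordinal → Ordinal) (hc : ∀ β < omega1, c β < omega1) :
    ∃ g : Ordinal → Ordinal, ∀ x, x < omega1 → g x < omega1 ∧ ∀ β < x, c β < g x := by
  have h : ∀ x, ∃ y, x < omega1 → y < omega1 ∧ ∀ β < x, c β < y := by
    intro x
    by_cases hx : x < omega1
    · rcases eq_or_ne x 0 with rfl | hx0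
      · exact ⟨1, fun _ => ⟨by simpa using succ_lt_omega1 omega1_limit.pos,
          fun β hβ => absurd hβ (by simp : ¬ β < 0)⟩⟩
      · haveI := countable_Iio hx
        have hcnt : (Iio x).Countable := Set.countable_coe_iff.1 inferInstance
        obtain ⟨f, hf⟩ := hcnt.exists_eq_range ⟨0, pos_iff_ne_zero.2 hx0⟩
        have hfx : ∀ n, f n < x := fun n => (hf ▸ Set.mem_range_self n : f n ∈ Iio x)
        refine ⟨⨆ n : ℕ, c (f n) + 1, fun _ => ⟨?_, ?_⟩⟩
        · exact DPaux.iSup_sequence_lt_omega1 (fun n : ℕ => c (f n) + 1)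
            (fun n => succ_lt_omega1 (hc (f n) ((hfx n).trans hx)))
        · intro β hβ
          obtain ⟨n, hn⟩ := (hf ▸ hβ : β ∈ range f)
          have h1 : c (f n) + 1 ≤ ⨆ n : ℕ, c (f n) + 1 :=
            Ordinal.le_iSup (fun n : ℕ => c (f n) + 1) n
          rw [hn] at h1
          have h2 : c β < c β + 1 := by
            rw [Ordinal.add_one_eq_succ]; exact Order.lt_succ (c β)
          exact h2.trans_le h1
    · exact ⟨0, fun h => absurd h hx⟩
  exact ⟨fun x => (h x).choose, fun x hx => (h x).choose_spec hx⟩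

end DPaux

/-- A `◇(ω₁)`-sequence of the ground model remains a `◇(ω₁)`-sequence after
countably closed forcing: for every name `X` for a subset of `ω₁`, every name `C` for a
club in `ω₁`, and every condition `p`, some extension `q ≤ p` forces, for some `α < ω₁`,
that `α ∈ C` and `X ∩ α = A α`. -/
theorem diamond_preserved_by_ctblClosed {P : Type*} [Preorder P] (hcc : CtblClosed P)
    (A : Ordinal → Set Ordinal) (hA : DiamondSeq (Iio omega1) omega1 A)
    (X : SubsetName P) (C : ClubName P) (p : P) :
    ∃ q, q ≤ p ∧ ∃ α < omega1, q ∈ C.mem α ∧ forcesEq X q (A α) α := by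
  classical
  set ch := DPaux.chain X C p with hch
  have good := DPaux.chain_good X C p hcc
  have hc : ∀ α, α < omega1 → ∃ γ, α < γ ∧ γ < omega1 ∧ ch α ∈ C.mem γ :=
    fun α h => (good α h).2.2.1
  set c : Ordinal → Ordinal := fun α => if h : α < omega1 then (hc α h).choose else 0 with hcdef
  have hc1 : ∀ α, ∀ h : α < omega1, α < c α ∧ c α < omega1 ∧ ch α ∈ C.mem (c α) := by
    intro α h
    simp only [hcdef, dif_pos h]
    exact (hc α h).choose_spec
  set B : Set Ordinal := {α | ch α ∈ X.mem α} with hB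
  set D : Set Ordinal := {δ | 0 < δ ∧ δ < omega1 ∧ ∀ β < δ, c β < δ} with hD
  have hDclub : clubIn D omega1 := by
    refine ⟨?_, fun δ hδ => hδ.2.1, ?_⟩
    · intro β hβ hβ0 hlim
      refine ⟨pos_iff_ne_zero.2 hβ0, hβ, fun γ hγ => ?_⟩
      obtain ⟨ξ, hξD, hγξ, hξβ⟩ := hlim γ hγ
      exact (hξD.2.2 γ hγξ).trans hξβ
    · intro β₀ hβ₀
      have hclt : ∀ β < omega1, c β < omega1 := fun β h => (hc1 β h).2.1
      obtain ⟨g, hg⟩ := DPaux.exists_stepfun c hclt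
      set d : ℕ → Ordinal :=
        fun n => Nat.rec (motive := fun _ => Ordinal) (β₀ + 1)
          (fun _ ih => max (ih + 1) (g ih)) n with hd
      have hdlt : ∀ n, d n < omega1 := by
        intro n; induction n with
        | zero => exact DPaux.succ_lt_omega1 hβ₀
        | succ n ihn => exact max_lt (DPaux.succ_lt_omega1 ihn) (hg (d n) ihn).1
      set δ := ⨆ n, d n with hδdef
      have hδlt : δ < omega1 := DPaux.iSup_sequence_lt_omega1 d hdlt
      have hle : ∀ n, d n ≤ δ := Ordinal.le_iSup d
      have hβd0 : β₀ < d 0 := by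
        show β₀ < β₀ + 1
        rw [Ordinal.add_one_eq_succ]; exact Order.lt_succ β₀
      have hβδ : β₀ < δ := hβd0.trans_le (hle 0)
      refine ⟨δ, ⟨(zero_le (a := β₀)).trans_lt hβδ, hδlt, ?_⟩, le_of_lt hβδ⟩
      intro β hβ
      obtain ⟨n, hn⟩ := Ordinal.lt_iSup_iff.1 hβ
      calc c β < g (d n) := (hg (d n) (hdlt n)).2 β hn
        _ ≤ d (n + 1) := le_max_right _ _
        _ ≤ δ := hle (n + 1)
  obtain ⟨δ, hguess, hδD⟩ := hA.2 B D hDclub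
  obtain ⟨hδω, hδeq⟩ := hguess
  have hδω' : δ < omega1 := hδω
  refine ⟨ch δ, (good δ hδω').1, δ, hδω', ?_, ?_⟩
  · refine C.closedF (ch δ) δ hδω' (ne_of_gt hδD.1) ?_
    intro β hβ r hr
    refine ⟨r, le_rfl, c β, (hc1 β (hβ.trans hδω')).1, hδD.2.2 β hβ, ?_⟩
    exact C.down (c β) (ch β) (hc1 β (hβ.trans hδω')).2.2 r
      (hr.trans ((good δ hδω').2.1 β hβ))
  · intro β hβ
    have hAB : β ∈ A δ ↔ ch β ∈ X.mem β := by
      rw [← hδeq]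
      constructor
      · exact fun h => h.1
      · exact fun h => ⟨h, hβ⟩
    constructor
    · intro hmem
      exact X.down β (ch β) (hAB.1 hmem) (ch δ) ((good δ hδω').2.1 β hβ)
    · intro hmem r hrq
      rcases (good β (hβ.trans hδω')).2.2.2 with h | h
      · exact absurd (hAB.2 h) hmem
      · exact h r (hrq.trans ((good δ hδω').2.1 β hβ))
end
end

section
/- In the uniformization forcing $P_{\bar{c}}$ (conditions are functions $f : \alpha \to 2$ for $\alpha < \omega_2$ such that for every $\delta \le \alpha$ with $\mathrm{cf}(\delta) = \omega_1$, $f \restriction \eta_\delta$ agrees with $c_\delta$ on a tail of $\eta_\delta$; ordered by extension), every countable decreasing sequence of conditions has a greatest lower bound. -/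
open Set

noncomputable section

/-- A condition in the uniformization forcing `P_c̄`: a function `f : dom → 2` with
`dom < ω₂`, such that for every `δ ≤ dom` of cofinality `ω₁`, `f` agrees with `c δ` on a
tail of the ladder at `δ`. -/
structure UnifCond (e : Ordinal → Ordinal → Ordinal) (c : Ordinal → Ordinal → Bool) where
  dom : Ordinal
  f : Ordinal → Bool
  dom_lt : dom < omega2
  tail : ∀ δ, δ ≤ dom → Ordinal.cof δ = Cardinal.aleph 1 →
    ∃ γ < δ, ∀ β ∈ lad e (Iio omega1) δ, γ ≤ β → f β = c δ β

/-- The extension order on `P_c̄`: `g ≤ h` iff `g` extends `h` as a function. -/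
def UnifCond.le {e : Ordinal → Ordinal → Ordinal} {c : Ordinal → Ordinal → Bool}
    (g h : UnifCond e c) : Prop :=
  h.dom ≤ g.dom ∧ ∀ β < h.dom, g.f β = h.f β

/-- In the uniformization forcing, every countable decreasing sequence of
conditions has a greatest lower bound. -/
theorem unifForcing_ctble_glb
    (e : Ordinal → Ordinal → Ordinal) (he : IsLadderEnum e)
    (c : Ordinal → Ordinal → Bool)
    (s : ℕ → UnifCond e c) (hdec : ∀ n, (s (n + 1)).le (s n)) :
    ∃ g : UnifCond e c, (∀ n, g.le (s n)) ∧
      ∀ g' : UnifCond e c, (∀ n, g'.le (s n)) → g'.le g := by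
  classical
  have hle : ∀ n m : ℕ, n ≤ m → (s m).le (s n) := by
    intro n m hnm
    induction m with
    | zero =>
      have : n = 0 := Nat.le_zero.mp hnm
      subst this; exact ⟨le_rfl, fun _ _ => rfl⟩
    | succ k ih =>
      rcases Nat.lt_or_ge n (k+1) with h | h
      · have h1 := ih (Nat.lt_succ_iff.mp h)
        have h2 := hdec k
        exact ⟨h1.1.trans h2.1, fun β hβ => (h2.2 β (lt_of_lt_of_le hβ h1.1)).trans (h1.2 β hβ)⟩
      · have : n = k + 1 := le_antisymm hnm h
        subst this; exact ⟨le_rfl, fun _ _ => rfl⟩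
  have hcons : ∀ n m β, β < (s n).dom → β < (s m).dom → (s n).f β = (s m).f β := by
    intro n m β hn hm
    rcases le_total n m with h | h
    · exact ((hle n m h).2 β hn).symm
    · exact (hle m n h).2 β hm
  set α : Ordinal := ⨆ n, (s n).dom with hα
  have hdomle : ∀ n, (s n).dom ≤ α := fun n => Ordinal.le_iSup (fun n => (s n).dom) n
  have hαlt : α < omega2 := by
    have hreg : Cardinal.IsRegular (Cardinal.aleph 2) := by
      have : (2 : Ordinal) = Order.succ 1 := by
        rw [← Ordinal.add_one_eq_succ]; norm_num
      rw [this]; exact Cardinal.isRegular_aleph_succ 1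
    apply Cardinal.iSup_lt_ord_of_isRegular hreg
    · rw [Cardinal.mk_denumerable]
      exact (Cardinal.aleph0_le_aleph 1).trans_lt (Cardinal.aleph_lt_aleph.2 one_lt_two)
    · exact fun n => (s n).dom_lt
  set F : Ordinal → Bool := fun β => if h : ∃ n, β < (s n).dom then (s h.choose).f β else false
    with hFdef
  have hF : ∀ n β, β < (s n).dom → F β = (s n).f β := by
    intro n β hβ
    have hex : ∃ m, β < (s m).dom := ⟨n, hβ⟩
    rw [hFdef]
    simp only [dif_pos hex]
    exact hcons hex.choose n β hex.choose_spec hβ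
  refine ⟨⟨α, F, hαlt, ?_⟩, ?_, ?_⟩
  · intro δ hδα hcof
    by_cases hδ : ∃ n, δ ≤ (s n).dom
    · obtain ⟨n, hn⟩ := hδ
      obtain ⟨γ, hγ, htail⟩ := (s n).tail δ hn hcof
      refine ⟨γ, hγ, fun β hβ hγβ => ?_⟩
      have hβδ : β < δ := by
        obtain ⟨i, hi, rfl⟩ := hβ
        exact (he δ ⟨lt_of_le_of_lt hδα hαlt, hcof⟩).2.1 i hi.2
      rw [hF n β (hβδ.trans_le hn)]
      exact htail β hβ hγβ
    · exfalso
      push_neg at hδ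
      have hδα'' : δ = α := le_antisymm hδα (Ordinal.iSup_le fun n => (hδ n).le)
      have h0 : Ordinal.cof α ≤ Cardinal.aleph0 := by
        have := Ordinal.cof_iSup_le (f := fun n => (s n).dom)
          (fun n => ((hδ n).trans_le hδα''.le : (s n).dom < α))
        simpa using this
      have h2 : Cardinal.aleph 1 ≤ Cardinal.aleph 0 := by
        rw [← hcof, hδα'', Cardinal.aleph_zero]; exact h0
      exact absurd h2 (not_le.2 (Cardinal.aleph_lt_aleph.2 zero_lt_one))
  · exact fun n => ⟨hdomle n, fun β hβ => hF n β hβ⟩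
  · intro g' hg'
    refine ⟨Ordinal.iSup_le fun n => (hg' n).1, fun β hβ => ?_⟩
    have hex : ∃ m, β < (s m).dom := Ordinal.lt_iSup_iff.mp hβ
    exact ((hg' hex.choose).2 β hex.choose_spec).trans
      (hF hex.choose β hex.choose_spec).symm
end
end
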